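/- arXiv:1304.5429 — 4 statements merged into one kernel-verified Lean document; each statement's English description precedes it below -/
import Mathlib

section
/- Call a finite family a' : Fin n' → ℕ of integers, each ≥ 2, a factored subform of a finite family a : Fin n → ℕ of integers, each ≥ 2, if there exists a map φ : Fin n' → Fin n such that for every i : Fin n the product ∏_{r ∈ φ⁻¹(i)} a' r divides a i; call it a nontrivial factored subform if in addition the multiset of entries of a' is not equal to the multiset of entries of a. Then there is no infinite sequence a⁰, a¹, a², … of finite families of integers ≥ 2 such that for every k, a^{k+1} is a nontrivial factored subform of a^k. -/
/-- `a'` is a factored subform of `a`: there is a map `φ` from indices of `a'`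
to indices of `a` such that for every index `i` of `a`, the product of the
entries of `a'` mapped to `i` divides `a i`. -/
def FactoredSubform {n' n : ℕ} (a' : Fin n' → ℕ) (a : Fin n → ℕ) : Prop :=
  ∃ φ : Fin n' → Fin n,
    ∀ i : Fin n, (∏ r ∈ Finset.univ.filter (fun r => φ r = i), a' r) ∣ a i

/-- A nontrivial factored subform: additionally, the multiset of entries of `a'`
differs from the multiset of entries of `a`. -/
def NontrivialFactoredSubform {n' n : ℕ} (a' : Fin n' → ℕ) (a : Fin n → ℕ) : Prop :=
  FactoredSubform a' a ∧ (↑(List.ofFn a') : Multiset ℕ) ≠ (↑(List.ofFn a) : Multiset ℕ)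

/-!
Taking the product of the fibres of `φ`, the product of a factored subform divides the product
of the original family, so it either drops strictly or stays the same. If it stays the same,
every fibre product equals the corresponding entry; as no entry is `1`, every fibre is
nonempty, and as the multisets differ, `φ` is not injective, so the family gets strictly
longer. Since a family of entries `≥ 2` is shorter than its product, the pair
(product, product − length) decreases lexicographically along the chain.
-/

open Finset

theorem Multiset.coe_ofFn_comp_of_bijective {α : Type*} {n' n : ℕ} {φ : Fin n' → Fin n}
    (hφ : φ.Bijective) (a : Fin n → α) :
    (↑(List.ofFn (a ∘ φ)) : Multiset α) = ↑(List.ofFn a) := by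
  rw [← Fin.univ_val_map, ← Fin.univ_val_map, ← Multiset.map_map,
    show φ = Equiv.ofBijective φ hφ from rfl, map_univ_val_equiv]

theorem Finset.card_lt_prod_of_two_le {ι : Type*} {s : Finset ι} {f : ι → ℕ}
    (hf : ∀ i ∈ s, 2 ≤ f i) : #s < ∏ i ∈ s, f i :=
  (Nat.lt_two_pow_self).trans_le (pow_card_le_prod s f 2 hf)

theorem Finset.eq_of_forall_dvd_of_prod_eq {ι : Type*} {s : Finset ι} {f g : ι → ℕ}
    (hdvd : ∀ i ∈ s, f i ∣ g i) (hg : ∀ i ∈ s, g i ≠ 0)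
    (h : ∏ i ∈ s, f i = ∏ i ∈ s, g i) : ∀ i ∈ s, f i = g i := by
  by_contra! ⟨j, hj, hne⟩
  have hle : ∀ i ∈ s, f i ≤ g i := fun i hi =>
    Nat.le_of_dvd (Nat.pos_of_ne_zero (hg i hi)) (hdvd i hi)
  have hpos : ∀ i ∈ s, 0 < f i := fun i hi => Nat.pos_of_ne_zero fun h0 => hg i hi <| by
    simpa [h0] using hdvd i hi
  exact h.not_lt (prod_lt_prod hpos hle ⟨j, hj, (hle j hj).lt_of_ne hne⟩)

namespace NontrivialFactoredSubform

variable {n' n : ℕ} {a' : Fin n' → ℕ} {a : Fin n → ℕ}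

theorem card_lt_of_prod_eq (h : NontrivialFactoredSubform a' a) (ha : ∀ i, 2 ≤ a i)
    (heq : ∏ r, a' r = ∏ i, a i) : n < n' := by
  obtain ⟨⟨φ, hφ⟩, hne⟩ := h
  have hfiber : ∀ i, ∏ r with φ r = i, a' r = a i := by
    refine fun i => eq_of_forall_dvd_of_prod_eq (s := univ) (fun i _ => hφ i)
      (fun i _ => by have := ha i; omega) ?_ i (mem_univ i)
    rwa [prod_fiberwise univ φ a']
  have hsurj : φ.Surjective := fun i => by
    by_contra! hempty
    have := hfiber i
    rw [filter_false_of_mem fun r _ => hempty r, prod_empty] at this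
    have := ha i
    omega
  simpa using Fintype.card_lt_of_surjective_not_injective φ hsurj fun hinj => hne <| by
    have hcomp : a' = a ∘ φ := funext fun r => by
      have hsingle : ({s | φ s = φ r} : Finset (Fin n')) = {r} := by
        ext s; simp [hinj.eq_iff]
      simpa [hsingle] using hfiber (φ r)
    rw [hcomp, Multiset.coe_ofFn_comp_of_bijective ⟨hinj, hsurj⟩]

theorem prod_lt_or_card_lt (h : NontrivialFactoredSubform a' a) (ha : ∀ i, 2 ≤ a i) :
    ∏ r, a' r < ∏ i, a i ∨ (∏ r, a' r = ∏ i, a i ∧ n < n') := by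
  have hdvd : ∏ r, a' r ∣ ∏ i, a i := by
    obtain ⟨φ, hφ⟩ := h.1
    rw [← prod_fiberwise univ φ a']
    exact prod_dvd_prod_of_dvd _ _ fun i _ => hφ i
  have hpos : 0 < ∏ i, a i := prod_pos fun i _ => by have := ha i; omega
  rcases (Nat.le_of_dvd hpos hdvd).lt_or_eq with hlt | heq
  · exact .inl hlt
  · exact .inr ⟨heq, h.card_lt_of_prod_eq ha heq⟩

end NontrivialFactoredSubform

theorem no_infinite_nontrivial_factored_subform_chain :
    ¬ ∃ (N : ℕ → ℕ) (A : ∀ k : ℕ, Fin (N k) → ℕ),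
      (∀ (k : ℕ) (i : Fin (N k)), 2 ≤ A k i) ∧
      (∀ k : ℕ, NontrivialFactoredSubform (A (k + 1)) (A k)) := by
  rintro ⟨N, A, hA, hsub⟩
  let μ : ℕ → ℕ ×ₗ ℕ := fun k => toLex (∏ i, A k i, ∏ i, A k i - N k)
  refine not_strictAnti_of_wellFoundedLT μ (strictAnti_nat_of_succ_lt fun k => ?_)
  rw [Prod.Lex.toLex_lt_toLex]
  rcases (hsub k).prod_lt_or_card_lt (hA k) with hlt | ⟨heq, hcard⟩
  · exact .inl hlt
  · have hlen : N (k + 1) < ∏ i, A (k + 1) i := by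
      simpa using card_lt_prod_of_two_le (s := univ) fun i _ => hA (k + 1) i
    exact .inr ⟨heq, by omega⟩
end

section
/- For every real ε > 0 there exist positive integers p and q such that q · Real.log 3 − p · Real.log 5 ≠ 0 and |q · Real.log 3 − p · Real.log 5| < ε. -/
/-!
Dirichlet's approximation theorem applied to `log 3 / log 5` yields positive integers with
`|q log 3 - p log 5|` as small as we like, and the form never vanishes since `3 ^ q ≠ 5 ^ p`
for `q > 0`.
-/

theorem exists_pos_nat_abs_mul_sub_lt {ξ ε : ℝ} (hξ : 0 < ξ) (hε : 0 < ε) :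
    ∃ p q : ℕ, 0 < p ∧ 0 < q ∧ |q * ξ - p| < ε := by
  obtain ⟨n, hn⟩ := exists_nat_one_div_lt (lt_min hε hξ)
  obtain ⟨j, k, hk, -, hjk⟩ := Real.exists_int_int_abs_mul_sub_le ξ n.succ_pos
  have hclose : |k * ξ - j| < min ε ξ := by
    refine hjk.trans_lt (lt_of_le_of_lt ?_ hn)
    gcongr
    linarith
  -- `j > k ξ - ξ ≥ 0` because `k ≥ 1`
  have hj : 0 < j := by
    have hk1 : (1 : ℝ) ≤ k := by exact_mod_cast hk
    have hlt : k * ξ - j < ξ := (abs_lt.mp (hclose.trans_le (min_le_right ε ξ))).2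
    have hj' : (0 : ℝ) < j := by nlinarith
    exact_mod_cast hj'
  lift j to ℕ using hj.le
  lift k to ℕ using hk.le
  exact ⟨j, k, by exact_mod_cast hj, by exact_mod_cast hk,
    by exact_mod_cast hclose.trans_le (min_le_left ε ξ)⟩

theorem exists_pos_nat_abs_mul_sub_mul_lt {x y ε : ℝ} (hx : 0 < x) (hy : 0 < y) (hε : 0 < ε) :
    ∃ p q : ℕ, 0 < p ∧ 0 < q ∧ |q * x - p * y| < ε := by
  obtain ⟨p, q, hp, hq, h⟩ := exists_pos_nat_abs_mul_sub_lt (div_pos hx hy) (div_pos hε hy)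
  refine ⟨p, q, hp, hq, ?_⟩
  have hscale : q * x - p * y = (q * (x / y) - p) * y := by field_simp
  rw [hscale, abs_mul, abs_of_pos hy]
  exact (lt_div_iff₀ hy).mp h

theorem nat_mul_log_ne_nat_mul_log {a b : ℕ} (hab : a.Coprime b) (ha : 1 < a) (hb : 0 < b)
    {p q : ℕ} (hq : 0 < q) : (q : ℝ) * Real.log a ≠ p * Real.log b := by
  intro h
  have hpow : a ^ q = b ^ p := by
    have : ((a ^ q : ℕ) : ℝ) = (b ^ p : ℕ) := by
      push_cast
      refine Real.log_injOn_pos (Set.mem_Ioi.mpr (by positivity))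
        (Set.mem_Ioi.mpr (by positivity)) ?_
      rwa [Real.log_pow, Real.log_pow]
    exact_mod_cast this
  have hone : a ^ q = 1 := by
    simpa [hpow] using Nat.Coprime.pow q p hab
  rw [pow_eq_one_iff] at hone
  omega

theorem small_nonzero_linear_form_in_two_logs (ε : ℝ) (hε : 0 < ε) :
    ∃ p q : ℕ, 0 < p ∧ 0 < q ∧
      (q : ℝ) * Real.log 3 - (p : ℝ) * Real.log 5 ≠ 0 ∧
      |(q : ℝ) * Real.log 3 - (p : ℝ) * Real.log 5| < ε := by
  obtain ⟨p, q, hp, hq, hsmall⟩ := exists_pos_nat_abs_mul_sub_mul_lt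
    (Real.log_pos (by norm_num : (1 : ℝ) < 3)) (Real.log_pos (by norm_num : (1 : ℝ) < 5)) hε
  have hne : (q : ℝ) * Real.log (3 : ℕ) ≠ p * Real.log (5 : ℕ) :=
    nat_mul_log_ne_nat_mul_log (by norm_num) (by norm_num) (by norm_num) hq
  push_cast at hne
  exact ⟨p, q, hp, hq, sub_ne_zero.mpr hne, hsmall⟩
end

section
/- Let n ≤ N be natural numbers, let a : Fin n → ℕ with a i ≥ 1 for all i, and let g : Fin N → ℚ be a straight-line program over {*, /} with inputs a, i.e.: g i = (a i : ℚ) for every i < n, and for every m with n ≤ m < N there exist indices i, j < m such that g m = g i * g j or g m = g i / g j. Then for every m < N there exists b : Fin n → ℤ with |b i| ≤ 2^m for all i, such that g m = ∏ i, ((a i : ℚ)) ^ (b i), where the exponentiation is integer power (zpow) in ℚ. -/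
/-!
Every gate value is a monomial `∏ aᵢ ^ bᵢ` in the inputs: a product or quotient of two
monomials is the monomial with the sum or difference of the exponent vectors, so the exponent
bound at most doubles from one gate to the next, and `2 ^ i + 2 ^ j ≤ 2 ^ m` for `i, j < m`.
-/

section Monomial

variable {ι G : Type*} [Fintype ι] [CommGroupWithZero G]

def IsMonomialBoundedBy (a : ι → G) (B : ℤ) (x : G) : Prop :=
  ∃ b : ι → ℤ, (∀ i, |b i| ≤ B) ∧ x = ∏ i, a i ^ b i

namespace IsMonomialBoundedBy

variable {a : ι → G} {B C : ℤ} {x y : G}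

theorem mono (hx : IsMonomialBoundedBy a B x) (hBC : B ≤ C) : IsMonomialBoundedBy a C x := by
  obtain ⟨b, hb, rfl⟩ := hx
  exact ⟨b, fun i => (hb i).trans hBC, rfl⟩

theorem generator [DecidableEq ι] (i : ι) : IsMonomialBoundedBy a 1 (a i) := by
  refine ⟨Pi.single i 1, fun k => ?_, ?_⟩
  · rcases eq_or_ne k i with rfl | hk <;> simp [*]
  · rw [Fintype.prod_eq_single i fun k hk => by simp [hk]]
    simp

theorem mul (ha : ∀ i, a i ≠ 0) (hx : IsMonomialBoundedBy a B x)
    (hy : IsMonomialBoundedBy a C y) : IsMonomialBoundedBy a (B + C) (x * y) := by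
  obtain ⟨b, hb, rfl⟩ := hx
  obtain ⟨c, hc, rfl⟩ := hy
  refine ⟨b + c, fun i => (abs_add_le _ _).trans (add_le_add (hb i) (hc i)), ?_⟩
  simp only [Pi.add_apply, zpow_add₀ (ha _), Finset.prod_mul_distrib]

theorem div (ha : ∀ i, a i ≠ 0) (hx : IsMonomialBoundedBy a B x)
    (hy : IsMonomialBoundedBy a C y) : IsMonomialBoundedBy a (B + C) (x / y) := by
  obtain ⟨b, hb, rfl⟩ := hx
  obtain ⟨c, hc, rfl⟩ := hy
  refine ⟨b - c, fun i => (abs_sub _ _).trans (add_le_add (hb i) (hc i)), ?_⟩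
  simp only [Pi.sub_apply, zpow_sub₀ (ha _), Finset.prod_div_distrib]

end IsMonomialBoundedBy

end Monomial

theorem two_pow_add_two_pow_le {i j m : ℕ} (hi : i < m) (hj : j < m) :
    (2 : ℤ) ^ i + 2 ^ j ≤ 2 ^ m := by
  calc (2 : ℤ) ^ i + 2 ^ j ≤ 2 ^ (m - 1) + 2 ^ (m - 1) :=
        add_le_add (pow_le_pow_right₀ one_le_two (by omega))
          (pow_le_pow_right₀ one_le_two (by omega))
    _ = 2 ^ m := by rw [← two_mul, ← pow_succ', Nat.sub_add_cancel (by omega)]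

theorem slp_to_poe (n N : ℕ) (hnN : n ≤ N)
    (a : Fin n → ℕ) (ha : ∀ i, 1 ≤ a i) (g : Fin N → ℚ)
    (hinput : ∀ i : Fin n, g (Fin.castLE hnN i) = (a i : ℚ))
    (hgate : ∀ m : Fin N, n ≤ (m : ℕ) →
      ∃ i j : Fin N, (i : ℕ) < (m : ℕ) ∧ (j : ℕ) < (m : ℕ) ∧
        (g m = g i * g j ∨ g m = g i / g j)) :
    ∀ m : Fin N, ∃ b : Fin n → ℤ, (∀ i, |b i| ≤ 2 ^ (m : ℕ)) ∧
      g m = ∏ i, ((a i : ℚ)) ^ (b i) := by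
  have ha₀ : ∀ i, (a i : ℚ) ≠ 0 := fun i =>
    Nat.cast_ne_zero.mpr (Nat.one_le_iff_ne_zero.mp (ha i))
  suffices h : ∀ m : Fin N, IsMonomialBoundedBy (fun i => (a i : ℚ)) (2 ^ (m : ℕ)) (g m) from h
  intro m
  induction m using WellFoundedLT.induction with
  | _ m ih =>
  by_cases hm : (m : ℕ) < n
  · rw [show g m = a ⟨m, hm⟩ from hinput ⟨m, hm⟩]
    exact IsMonomialBoundedBy.generator _ |>.mono (one_le_pow₀ one_le_two)
  · obtain ⟨i, j, hi, hj, hg | hg⟩ := hgate m (not_lt.mp hm) <;> rw [hg]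
    · exact ((ih i hi).mul ha₀ (ih j hj)).mono (two_pow_add_two_pow_le hi hj)
    · exact ((ih i hi).div ha₀ (ih j hj)).mono (two_pow_add_two_pow_le hi hj)
end

section
/- Let n be a natural number, and let a : Fin n → ℕ and b : Fin n → ℕ with a i ≥ 1 and b i ≥ 1 for all i. Then there exist a natural number N with n ≤ N ≤ n + n + 2 · ∑ i, (Nat.log2 (b i) + 1), and a straight-line program over {*, /} with inputs a, i.e. a sequence g : Fin N → ℚ with g i = (a i : ℚ) for every i < n and such that for every m with n ≤ m < N there exist indices i, j < m with g m = g i * g j or g m = g i / g j, whose last entry satisfies g (N − 1) = ∏ i, ((a i : ℚ)) ^ (b i). -/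
/-!
Square-and-multiply: since `x ^ e = (x ^ (e / 2)) ^ 2 * x ^ (e % 2)` and `log₂ e = log₂ (e / 2) + 1`
for `e ≥ 2`, the power `x ^ e` of an available value costs at most `2 log₂ e` further gates. The
product `∏ aᵢ ^ bᵢ` is then accumulated, one multiplication per factor, starting from the value
`1 = a₀ / a₀` rather than from the first factor, so that the accumulator is always the last entry.
-/

open Finset

variable {α : Type*}

inductive IsStraightLine [Mul α] [Div α] (inputs : List α) : List α → Prop
  | refl : IsStraightLine inputs inputs
  | extend {L : List α} {x y z : α} : IsStraightLine inputs L → x ∈ L → y ∈ L →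
      (z = x * y ∨ z = x / y) → IsStraightLine inputs (L ++ [z])

namespace IsStraightLine

section Semantics

variable [Mul α] [Div α] {I L : List α}

theorem isPrefix (h : IsStraightLine I L) : I <+: L := by
  induction h with
  | refl => exact List.prefix_refl I
  | extend _ _ _ _ ih => exact ih.trans (List.prefix_append _ _)

theorem exists_operands (h : IsStraightLine I L) (m : Fin L.length) (hm : I.length ≤ m) :
    ∃ i j : Fin L.length, i < m ∧ j < m ∧ (L[m] = L[i] * L[j] ∨ L[m] = L[i] / L[j]) := by
  induction h with
  | refl => exact absurd m.2 (by omega)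
  | @extend L x y z _ hx hy hz ih =>
    have hmL : (m : ℕ) < L.length + 1 := by simpa using m.2
    rcases Nat.lt_succ_iff_lt_or_eq.1 hmL with hlt | heq
    · obtain ⟨i, j, hi, hj, hij⟩ := ih ⟨m, hlt⟩ hm
      refine ⟨i.castLE (by simp), j.castLE (by simp), hi, hj, ?_⟩
      simpa [List.getElem_append_left hlt, List.getElem_append_left i.2,
        List.getElem_append_left j.2] using hij
    · obtain ⟨i, hi, rfl⟩ := List.mem_iff_getElem.1 hx
      obtain ⟨j, hj, rfl⟩ := List.mem_iff_getElem.1 hy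
      refine ⟨⟨i, by simp; omega⟩, ⟨j, by simp; omega⟩, by simp [Fin.lt_def]; omega,
        by simp [Fin.lt_def]; omega, ?_⟩
      simpa [List.getElem_concat_length heq, List.getElem_append_left hi,
        List.getElem_append_left hj] using hz

end Semantics

theorem exists_pow [Monoid α] [Div α] {I L : List α} (hL : IsStraightLine I L) {x : α}
    (hx : x ∈ L) {e : ℕ} (he : 1 ≤ e) :
    ∃ L', L <+: L' ∧ IsStraightLine I L' ∧ x ^ e ∈ L' ∧ L'.length ≤ L.length + 2 * Nat.log2 e := by
  induction e using Nat.strong_induction_on with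
  | _ e ih =>
    rcases lt_or_ge e 2 with he2 | he2
    · obtain rfl : e = 1 := by omega
      exact ⟨L, List.prefix_refl L, hL, by simpa using hx, by omega⟩
    obtain ⟨L₁, hLL₁, h₁, hy, hlen₁⟩ := ih (e / 2) (by omega) (by omega)
    have hlog : Nat.log2 e = Nat.log2 (e / 2) + 1 := by rw [Nat.log2_def, if_pos he2]
    set y := x ^ (e / 2)
    have hsq : IsStraightLine I (L₁ ++ [y * y]) := h₁.extend hy hy (.inl rfl)
    rcases Nat.mod_two_eq_zero_or_one e with heven | hodd
    · have hpow : x ^ e = y * y := by rw [← pow_add]; congr 1; omega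
      refine ⟨L₁ ++ [y * y], hLL₁.trans (List.prefix_append _ _), hsq, by simp [hpow], ?_⟩
      simp only [List.length_append, List.length_singleton]
      omega
    · have hpow : x ^ e = y * y * x := by rw [← pow_add, ← pow_succ]; congr 1; omega
      refine ⟨L₁ ++ [y * y] ++ [y * y * x],
        hLL₁.trans ((List.prefix_append _ _).trans (List.prefix_append _ _)),
        hsq.extend (by simp) (by simp [hLL₁.subset hx]) (.inl rfl), by simp [hpow], ?_⟩
      simp only [List.length_append, List.length_singleton]
      omega

theorem exists_mul_pow [Monoid α] [Div α] {I P : List α} {x y : α}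
    (h : IsStraightLine I (P ++ [y])) (hx : x ∈ P ++ [y]) (e : ℕ) :
    ∃ P', P ++ [y] <+: P' ++ [y * x ^ e] ∧ IsStraightLine I (P' ++ [y * x ^ e]) ∧
      P'.length ≤ P.length + 2 * Nat.log2 e + 1 := by
  rcases Nat.eq_zero_or_pos e with rfl | he
  · exact ⟨P, by simp, by simpa using h, by omega⟩
  obtain ⟨L, hPL, hL, hpow, hlen⟩ := h.exists_pow hx he
  refine ⟨L, hPL.trans (List.prefix_append _ _),
    hL.extend (hPL.subset (by simp)) hpow (.inl rfl), ?_⟩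
  simp only [List.length_append, List.length_singleton] at hlen
  omega

theorem exists_mul_prod_pow [CommMonoid α] [Div α] {ι : Type*} (s : Finset ι) (x : ι → α)
    (e : ι → ℕ) {I P : List α} {y : α} (h : IsStraightLine I (P ++ [y]))
    (hx : ∀ i ∈ s, x i ∈ P ++ [y]) :
    ∃ P', IsStraightLine I (P' ++ [y * ∏ i ∈ s, x i ^ e i]) ∧
      P'.length ≤ P.length + ∑ i ∈ s, (2 * Nat.log2 (e i) + 1) := by
  classical
  induction s using Finset.induction_on generalizing P y with
  | empty => exact ⟨P, by simpa using h, by simp⟩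
  | insert j s hj ih =>
    obtain ⟨P₁, hPP₁, h₁, hlen₁⟩ := h.exists_mul_pow (hx j (mem_insert_self j s)) (e j)
    obtain ⟨P₂, h₂, hlen₂⟩ := ih h₁ fun i hi ↦ hPP₁.subset (hx i (mem_insert_of_mem hi))
    refine ⟨P₂, by rwa [prod_insert hj, ← mul_assoc], ?_⟩
    rw [sum_insert hj]
    omega

end IsStraightLine

theorem poe_to_slp_general (n : ℕ) (a b : Fin n → ℕ)
    (ha : ∀ i, 1 ≤ a i) :
    ∃ (N : ℕ) (hnN : n ≤ N),
      N ≤ n + n + 2 * ∑ i, (Nat.log2 (b i) + 1) ∧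
      ∃ g : Fin N → ℚ,
        (∀ i : Fin n, g (Fin.castLE hnN i) = (a i : ℚ)) ∧
        (∀ m : Fin N, n ≤ (m : ℕ) →
          ∃ i j : Fin N, (i : ℕ) < (m : ℕ) ∧ (j : ℕ) < (m : ℕ) ∧
            (g m = g i * g j ∨ g m = g i / g j)) ∧
        (∀ m : Fin N, (m : ℕ) + 1 = N → g m = ∏ i, ((a i : ℚ)) ^ (b i)) := by
  rcases Nat.eq_zero_or_pos n with rfl | hn
  · exact ⟨0, le_rfl, by simp, Fin.elim0, (·.elim0), (·.elim0), (·.elim0)⟩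
  set I := List.ofFn fun i ↦ (a i : ℚ)
  have hI : ∀ i, (a i : ℚ) ∈ I := fun i ↦ List.mem_ofFn.2 ⟨i, rfl⟩
  have hone : IsStraightLine I (I ++ [1]) := by
    have ha₀ : (a ⟨0, hn⟩ : ℚ) ≠ 0 := by have := ha ⟨0, hn⟩; positivity
    exact .extend .refl (hI _) (hI _) (.inr (div_self ha₀).symm)
  obtain ⟨P, hP, hlen⟩ := hone.exists_mul_prod_pow univ (fun i ↦ (a i : ℚ)) b
    fun i _ ↦ List.mem_append_left _ (hI i)
  rw [one_mul] at hP
  have hsum : ∑ i, (2 * Nat.log2 (b i) + 1) ≤ 2 * ∑ i, (Nat.log2 (b i) + 1) := by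
    rw [mul_sum]; exact sum_le_sum fun i _ ↦ by omega
  set L := P ++ [∏ i, (a i : ℚ) ^ b i]
  have hIL : I.length ≤ L.length := hP.isPrefix.length_le
  have hLlen : L.length = P.length + 1 := by simp [L]
  simp only [I, List.length_ofFn] at hlen hIL
  refine ⟨L.length, hIL, by omega, fun m ↦ L[m], fun i ↦ ?_,
    fun m hm ↦ hP.exists_operands m (by simpa [I] using hm),
    fun m hm ↦ List.getElem_concat_length (by omega) _⟩
  simp [← hP.isPrefix.getElem (by simp [I] : (i : ℕ) < I.length), I]

theorem poe_to_slp (n : ℕ) (a b : Fin n → ℕ)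
    (ha : ∀ i, 1 ≤ a i) (hb : ∀ i, 1 ≤ b i) :
    ∃ (N : ℕ) (hnN : n ≤ N),
      N ≤ n + n + 2 * ∑ i, (Nat.log2 (b i) + 1) ∧
      ∃ g : Fin N → ℚ,
        (∀ i : Fin n, g (Fin.castLE hnN i) = (a i : ℚ)) ∧
        (∀ m : Fin N, n ≤ (m : ℕ) →
          ∃ i j : Fin N, (i : ℕ) < (m : ℕ) ∧ (j : ℕ) < (m : ℕ) ∧
            (g m = g i * g j ∨ g m = g i / g j)) ∧
        (∀ m : Fin N, (m : ℕ) + 1 = N → g m = ∏ i, ((a i : ℚ)) ^ (b i)) :=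
  poe_to_slp_general n a b ha
end
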